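/- Let $f : \mathbb{R}^{d_x} \to \mathbb{R}^{d_\theta}$ satisfy the linearization bound $\| f(x) - f(x_u) - J(x - x_u) \|_2 \leq \mu_x \| x - x_u \|_2$ on a region of interest, where $J$ has smallest singular value $\sigma_{\min}(J) > 0$, i.e. $\| J w \|_2 \geq \sigma_{\min}(J) \| w \|_2$ for all $w$. Let $g : \mathbb{R}^{d_x} \to \mathbb{R}^{d_\theta}$ be $\mu_x$-Lipschitz, fix $x_r$, and suppose $\| \tilde{x}_r - x_r \|_2 \leq \epsilon$. Define the residual $R = (g(x_r) - g(\tilde{x}_r)) - (f(\tilde{x}_u) - f(x_u))$ and suppose $\| R \|_2 \le L^{1/2}$, where $L \ge 0$. Then $\| \tilde{x}_u - x_u \|_2 \leq \frac{\mu_x \epsilon + L^{1/2} + \mu_x \| \tilde{x}_u - x_u\|_2 }{\sigma_{\min}(J)}$; in particular, if $\sigma_{\min}(J) > \mu_x$, then $\| \tilde{x}_u - x_u \|_2 \leq \frac{\mu_x \epsilon + L^{1/2}}{\sigma_{\min}(J) - \mu_x}$. -/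

import Mathlib

/-!
The retain-side gradient difference `g xr - g xtr` is small because `g` is Lipschitz and `xtr`
is `ε`-close to `xr`; the residual bound then transfers this smallness to `f xtu - f xu`.
On the other hand, the linearization of `f` at `xu` and the lower bound on `J` force
`‖f xtu - f xu‖ ≥ (σmin - μx) ‖xtu - xu‖`. Comparing the two bounds gives both estimates.
-/

section NormedGroup

variable {E F : Type*} [SeminormedAddCommGroup E] [SeminormedAddCommGroup F]

theorem mul_norm_sub_le_norm_sub_add_of_linearApprox {f J : E → F} {x₀ x : E} {μ σ : ℝ}
    (hlin : ‖f x - f x₀ - J (x - x₀)‖ ≤ μ * ‖x - x₀‖) (hJ : σ * ‖x - x₀‖ ≤ ‖J (x - x₀)‖) :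
    σ * ‖x - x₀‖ ≤ ‖f x - f x₀‖ + μ * ‖x - x₀‖ := by
  have hJle : ‖J (x - x₀)‖ ≤ ‖f x - f x₀‖ + ‖f x - f x₀ - J (x - x₀)‖ :=
    norm_le_norm_add_norm_sub (f x - f x₀) (J (x - x₀))
  linarith

theorem norm_sub_le_of_lipschitz_of_residual {g : E → F} {a b : E} {u : F} {μ ε r : ℝ}
    (hμ : 0 ≤ μ) (hg : ‖g a - g b‖ ≤ μ * ‖a - b‖) (hab : ‖a - b‖ ≤ ε)
    (hres : ‖(g a - g b) - u‖ ≤ r) :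
    ‖u‖ ≤ μ * ε + r := by
  have hgab : ‖g a - g b‖ ≤ μ * ε := hg.trans (mul_le_mul_of_nonneg_left hab hμ)
  linarith [norm_le_norm_add_norm_sub (g a - g b) u]

end NormedGroup

theorem le_div_sub_of_mul_le_add_mul {t c μ σ : ℝ} (h : σ * t ≤ c + μ * t) (hμσ : μ < σ) :
    t ≤ c / (σ - μ) := by
  rw [le_div_iff₀ (sub_pos.mpr hμσ)]
  linarith

theorem draun_first_order_reconstruction_bound_general
    (dx dθ : ℕ)
    (f g : EuclideanSpace ℝ (Fin dx) → EuclideanSpace ℝ (Fin dθ))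
    (J : EuclideanSpace ℝ (Fin dx) →L[ℝ] EuclideanSpace ℝ (Fin dθ))
    (μx σmin ε L : ℝ) (hσ : 0 < σmin) (hμx : 0 ≤ μx)
    (xu xtu xr xtr : EuclideanSpace ℝ (Fin dx))
    (hlin : ∀ x, ‖f x - f xu - J (x - xu)‖ ≤ μx * ‖x - xu‖)
    (hJlower : ∀ w, σmin * ‖w‖ ≤ ‖J w‖)
    (hglip : ∀ a b, ‖g a - g b‖ ≤ μx * ‖a - b‖)
    (hprox : ‖xtr - xr‖ ≤ ε)
    (hres : ‖(g xr - g xtr) - (f xtu - f xu)‖ ≤ Real.sqrt L) :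
    ‖xtu - xu‖ ≤ (μx * ε + Real.sqrt L + μx * ‖xtu - xu‖) / σmin ∧
      (μx < σmin → ‖xtu - xu‖ ≤ (μx * ε + Real.sqrt L) / (σmin - μx)) := by
  have hf : ‖f xtu - f xu‖ ≤ μx * ε + Real.sqrt L :=
    norm_sub_le_of_lipschitz_of_residual hμx (hglip xr xtr) (by rwa [norm_sub_rev]) hres
  have hmain : σmin * ‖xtu - xu‖ ≤ μx * ε + Real.sqrt L + μx * ‖xtu - xu‖ :=
    (mul_norm_sub_le_norm_sub_add_of_linearApprox (hlin xtu) (hJlower _)).trans (by gcongr)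
  exact ⟨(le_div_iff₀' hσ).mpr hmain, le_div_sub_of_mul_le_add_mul hmain⟩

/-- First-order DRAUN reconstruction upper bound. -/
theorem draun_first_order_reconstruction_bound
    (dx dθ : ℕ)
    (f g : EuclideanSpace ℝ (Fin dx) → EuclideanSpace ℝ (Fin dθ))
    (J : EuclideanSpace ℝ (Fin dx) →L[ℝ] EuclideanSpace ℝ (Fin dθ))
    (μx σmin ε L : ℝ) (hσ : 0 < σmin) (hμx : 0 ≤ μx) (hε : 0 ≤ ε) (hL : 0 ≤ L)
    (xu xtu xr xtr : EuclideanSpace ℝ (Fin dx))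
    (hlin : ∀ x, ‖f x - f xu - J (x - xu)‖ ≤ μx * ‖x - xu‖)
    (hJlower : ∀ w, σmin * ‖w‖ ≤ ‖J w‖)
    (hglip : ∀ a b, ‖g a - g b‖ ≤ μx * ‖a - b‖)
    (hprox : ‖xtr - xr‖ ≤ ε)
    (hres : ‖(g xr - g xtr) - (f xtu - f xu)‖ ≤ Real.sqrt L) :
    ‖xtu - xu‖ ≤ (μx * ε + Real.sqrt L + μx * ‖xtu - xu‖) / σmin ∧
      (μx < σmin → ‖xtu - xu‖ ≤ (μx * ε + Real.sqrt L) / (σmin - μx)) :=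
  draun_first_order_reconstruction_bound_general dx dθ f g J μx σmin ε L hσ hμx xu xtu xr xtr hlin
    hJlower hglip hprox hres
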